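/- arXiv:2007.08820 — 3 statements merged into one kernel-verified Lean document; each statement's English description precedes it below -/
import Mathlib

section
/- Among all p×q matrices π with nonnegative entries, prescribed row sums μ_u, prescribed column sums ν_v (with ∑ μ = ∑ ν = 1), and assuming p·min_u μ_u + q·min_v ν_v ≥ 1, the matrix π⁺(u,v) = μ_u/q + ν_v/p − 1/(pq) uniquely minimizes the squared deviation ∑_{u,v} (π(u,v) − 1/(pq))^2. -/
/-!
Write `c = 1/(pq)`. The matrix `π⁺ - c` has the form `a u + b v`, while for any `π` with the
same marginals as `π⁺` the difference `π - π⁺` has zero row and column sums, so it is orthogonal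
(for the Frobenius inner product) to every matrix of the form `a u + b v`. By Pythagoras,
`‖π - c‖² = ‖π - π⁺‖² + ‖π⁺ - c‖²`, which gives both minimality and uniqueness.
-/

open Finset

section Marginals

variable {ι κ : Type*} [Fintype ι] [Fintype κ]

theorem sum_sum_mul_add_eq_zero {D : ι → κ → ℝ} (hrow : ∀ i, ∑ j, D i j = 0)
    (hcol : ∀ j, ∑ i, D i j = 0) (a : ι → ℝ) (b : κ → ℝ) :
    ∑ i, ∑ j, D i j * (a i + b j) = 0 := by
  simp only [mul_add, sum_add_distrib]
  rw [sum_comm (f := fun i j => D i j * b j)]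
  simp only [← sum_mul, hrow, hcol, zero_mul, sum_const_zero, add_zero]

theorem sum_sum_sq_sub_eq_of_marginals {X Y : ι → κ → ℝ} {c : ℝ} {a : ι → ℝ} {b : κ → ℝ}
    (hrow : ∀ i, ∑ j, X i j = ∑ j, Y i j) (hcol : ∀ j, ∑ i, X i j = ∑ i, Y i j)
    (hY : ∀ i j, Y i j - c = a i + b j) :
    ∑ i, ∑ j, (X i j - c) ^ 2 = ∑ i, ∑ j, (X i j - Y i j) ^ 2 + ∑ i, ∑ j, (Y i j - c) ^ 2 := by
  have hcross : ∑ i, ∑ j, (X i j - Y i j) * (a i + b j) = 0 :=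
    sum_sum_mul_add_eq_zero (by simp [sum_sub_distrib, hrow]) (by simp [sum_sub_distrib, hcol]) a b
  have hexpand : ∀ i j, (X i j - c) ^ 2
      = (X i j - Y i j) ^ 2 + (Y i j - c) ^ 2 + 2 * ((X i j - Y i j) * (a i + b j)) := by
    intro i j
    rw [← hY]
    ring
  simp only [hexpand, sum_add_distrib, ← mul_sum, hcross, mul_zero, add_zero]

theorem eq_of_sum_sum_sq_sub_eq_zero {X Y : ι → κ → ℝ}
    (h : ∑ i, ∑ j, (X i j - Y i j) ^ 2 = 0) : X = Y := by
  have hrow := (Fintype.sum_eq_zero_iff_of_nonneg fun i =>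
    sum_nonneg fun j _ => sq_nonneg (X i j - Y i j)).mp h
  funext i j
  have hentry := (Fintype.sum_eq_zero_iff_of_nonneg fun j =>
    sq_nonneg (X i j - Y i j)).mp (congrFun hrow i)
  exact sub_eq_zero.mp (pow_eq_zero_iff two_ne_zero |>.mp (congrFun hentry j))

end Marginals

section PlusCoupling

variable {ι κ : Type*} [Fintype ι] [Fintype κ] (μ : ι → ℝ) (ν : κ → ℝ)

/-- The matrix `π⁺` of the paper. -/
noncomputable def plusCoupling (i : ι) (j : κ) : ℝ :=
  μ i / Fintype.card κ + ν j / Fintype.card ι - 1 / (Fintype.card ι * Fintype.card κ)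

theorem card_ne_zero_of_sum_eq_one {μ : ι → ℝ} (hμ : ∑ i, μ i = 1) :
    (Fintype.card ι : ℝ) ≠ 0 := by
  obtain ⟨i, -⟩ := nonempty_of_sum_ne_zero (hμ ▸ one_ne_zero : ∑ i, μ i ≠ 0)
  have : Nonempty ι := ⟨i⟩
  exact Nat.cast_ne_zero.mpr Fintype.card_ne_zero

theorem plusCoupling_sub_eq (i : ι) (j : κ) :
    plusCoupling μ ν i j - 1 / (Fintype.card ι * Fintype.card κ)
      = (μ i / Fintype.card κ - 1 / (Fintype.card ι * Fintype.card κ))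
        + (ν j / Fintype.card ι - 1 / (Fintype.card ι * Fintype.card κ)) := by
  unfold plusCoupling
  ring

variable {μ ν}

theorem sum_plusCoupling_right (hν : ∑ j, ν j = 1) (i : ι) :
    ∑ j, plusCoupling μ ν i j = μ i := by
  have hκ := card_ne_zero_of_sum_eq_one hν
  simp only [plusCoupling, sum_sub_distrib, sum_add_distrib, sum_const, card_univ,
    nsmul_eq_mul, ← sum_div, hν]
  field_simp
  ring

theorem sum_plusCoupling_left (hμ : ∑ i, μ i = 1) (j : κ) :
    ∑ i, plusCoupling μ ν i j = ν j := by
  have hι := card_ne_zero_of_sum_eq_one hμ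
  simp only [plusCoupling, sum_sub_distrib, sum_add_distrib, sum_const, card_univ,
    nsmul_eq_mul, ← sum_div, hμ]
  field_simp
  ring

end PlusCoupling

theorem stmt3_general (p q : ℕ)
    (μ : Fin p → ℝ) (ν : Fin q → ℝ)
    (hμ : ∑ u, μ u = 1) (hν : ∑ v, ν v = 1) :
    ∀ π : Fin p → Fin q → ℝ,
      (∀ u v, 0 ≤ π u v) →
      (∀ u, ∑ v, π u v = μ u) →
      (∀ v, ∑ u, π u v = ν v) →
      (∑ u, ∑ v, ((μ u / q + ν v / p - 1 / (p * q)) - 1 / (p * q)) ^ 2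
          ≤ ∑ u, ∑ v, (π u v - 1 / (p * q)) ^ 2) ∧
      (∑ u, ∑ v, (π u v - 1 / (p * q)) ^ 2
          = ∑ u, ∑ v, ((μ u / q + ν v / p - 1 / (p * q)) - 1 / (p * q)) ^ 2 →
        π = fun u v => μ u / q + ν v / p - 1 / (p * q)) := by
  intro π _ hrow hcol
  have hpythagoras := sum_sum_sq_sub_eq_of_marginals (X := π) (Y := plusCoupling μ ν)
    (fun u => by rw [hrow, sum_plusCoupling_right hν])
    (fun v => by rw [hcol, sum_plusCoupling_left hμ])
    (plusCoupling_sub_eq μ ν)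
  have hnonneg : 0 ≤ ∑ u, ∑ v, (π u v - plusCoupling μ ν u v) ^ 2 :=
    sum_nonneg fun u _ => sum_nonneg fun v _ => sq_nonneg _
  have hdist : ∑ u, ∑ v, (π u v - plusCoupling μ ν u v) ^ 2 = 0 → π = plusCoupling μ ν :=
    eq_of_sum_sum_sq_sub_eq_zero
  unfold plusCoupling at hpythagoras hnonneg hdist
  simp only [Fintype.card_fin] at hpythagoras hnonneg hdist
  exact ⟨by linarith, fun heq => hdist (by linarith)⟩

theorem stmt3 (p q : ℕ) (hp : 0 < p) (hq : 0 < q)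
    (μ : Fin p → ℝ) (ν : Fin q → ℝ)
    (hμ0 : ∀ u, 0 ≤ μ u) (hν0 : ∀ v, 0 ≤ ν v)
    (hμ : ∑ u, μ u = 1) (hν : ∑ v, ν v = 1)
    (hcond : (p : ℝ) * Finset.univ.inf' (Finset.univ_nonempty_iff.mpr ⟨⟨0, hp⟩⟩) μ
        + (q : ℝ) * Finset.univ.inf' (Finset.univ_nonempty_iff.mpr ⟨⟨0, hq⟩⟩) ν ≥ 1) :
    ∀ π : Fin p → Fin q → ℝ,
      (∀ u v, 0 ≤ π u v) →
      (∀ u, ∑ v, π u v = μ u) →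
      (∀ v, ∑ u, π u v = ν v) →
      (∑ u, ∑ v, ((μ u / q + ν v / p - 1 / (p * q)) - 1 / (p * q)) ^ 2
          ≤ ∑ u, ∑ v, (π u v - 1 / (p * q)) ^ 2) ∧
      (∑ u, ∑ v, (π u v - 1 / (p * q)) ^ 2
          = ∑ u, ∑ v, ((μ u / q + ν v / p - 1 / (p * q)) - 1 / (p * q)) ^ 2 →
        π = fun u v => μ u / q + ν v / p - 1 / (p * q)) :=
  stmt3_general p q μ ν hμ hν
end

section
/- A p×q matrix π which is a probability matrix (nonnegative entries summing to 1) satisfies the full Monge equality π(u,v) + π(u',v') = π(u',v) + π(u,v') for all u,u',v,v' if and only if π(u,v) = μ_u/q + ν_v/p − 1/(pq) for all u,v, where μ and ν are the row and column marginals of π. -/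
open Finset

section Monge

variable {α β K : Type*} [Field K]

def IsMongeEq (f : α → β → K) : Prop :=
  ∀ u u' v v', f u v + f u' v' = f u' v + f u v'

theorem isMongeEq_of_eq_add {f : α → β → K} (a : α → K) (b : β → K)
    (h : ∀ u v, f u v = a u + b v) : IsMongeEq f := by
  intro u u' v v'
  rw [h u v, h u' v', h u' v, h u v']
  ring

variable [Fintype α] [Fintype β] [Nonempty α] [Nonempty β] [CharZero K]

theorem IsMongeEq.eq_rowSum_add_colSum {f : α → β → K} (hf : IsMongeEq f) (u : α) (v : β) :
    f u v = (∑ w, f u w) / Fintype.card β + (∑ t, f t v) / Fintype.card α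
      - (∑ t, ∑ w, f t w) / (Fintype.card α * Fintype.card β) := by
  have summed : ∑ u', ∑ v', (f u v + f u' v') = ∑ u', ∑ v', (f u' v + f u v') :=
    sum_congr rfl fun u' _ => sum_congr rfl fun v' _ => hf u u' v v'
  simp only [sum_add_distrib, sum_const, card_univ, nsmul_eq_mul, ← mul_sum] at summed
  have hα : (Fintype.card α : K) ≠ 0 := Nat.cast_ne_zero.mpr Fintype.card_ne_zero
  have hβ : (Fintype.card β : K) ≠ 0 := Nat.cast_ne_zero.mpr Fintype.card_ne_zero
  field_simp
  linear_combination summed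

theorem isMongeEq_iff_eq_rowSum_add_colSum (f : α → β → K) :
    IsMongeEq f ↔ ∀ u v, f u v = (∑ w, f u w) / Fintype.card β
      + (∑ t, f t v) / Fintype.card α - (∑ t, ∑ w, f t w) / (Fintype.card α * Fintype.card β) :=
  ⟨IsMongeEq.eq_rowSum_add_colSum, fun h =>
    isMongeEq_of_eq_add (fun u => (∑ w, f u w) / Fintype.card β
        - (∑ t, ∑ w, f t w) / (Fintype.card α * Fintype.card β))
      (fun v => (∑ t, f t v) / Fintype.card α) fun u v => (h u v).trans (by ring)⟩

end Monge

theorem stmt11_general (p q : ℕ) (hp : 0 < p) (hq : 0 < q)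
    (π : Fin p → Fin q → ℝ)
    (hsum : ∑ u, ∑ v, π u v = 1) :
    (∀ (u u' : Fin p) (v v' : Fin q),
        π u v + π u' v' = π u' v + π u v') ↔
    (∀ u v, π u v = (∑ w, π u w) / q + (∑ t, π t v) / p - 1 / (p * q)) := by
  have : NeZero p := ⟨hp.ne'⟩
  have : NeZero q := ⟨hq.ne'⟩
  simpa only [IsMongeEq, Fintype.card_fin, hsum] using isMongeEq_iff_eq_rowSum_add_colSum π

theorem stmt11 (p q : ℕ) (hp : 0 < p) (hq : 0 < q)
    (π : Fin p → Fin q → ℝ) (hpos : ∀ u v, 0 ≤ π u v)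
    (hsum : ∑ u, ∑ v, π u v = 1) :
    (∀ (u u' : Fin p) (v v' : Fin q),
        π u v + π u' v' = π u' v + π u v') ↔
    (∀ u v, π u v = (∑ w, π u w) / q + (∑ t, π t v) / p - 1 / (p * q)) :=
  stmt11_general p q hp hq π hsum
end

section
/- Let π be a p×q probability matrix with marginals μ_u = ∑_v π(u,v) and ν_v = ∑_u π(u,v). Then the Condorcet equilibrium identity (p−1)(q−1)·∑_{u,v} π(u,v)² + ∑_{u,v} π(u,v)(1 − μ_u − ν_v + π(u,v)) = (p−1)·∑_{u,v} π(u,v)(μ_u − π(u,v)) + (q−1)·∑_{u,v} π(u,v)(ν_v − π(u,v)) holds if and only if π(u,v) = μ_u/q + ν_v/p − 1/(pq) for all u, v. -/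
/-!
Let `fit u v = μ u / q + ν v / p - 1 / (p q)` be the additive (two-way main-effects) fit of `π`.
It has the same margins as `π`, so the residual `π - fit` has zero row and column sums and is
therefore orthogonal to every function of the form `a u + b v + c`, in particular to `fit`.
Expanding with this orthogonality, both sides of the Condorcet identity differ by exactly
`p q ∑ (π - fit)²`, which vanishes iff `π = fit`.
-/

open Finset

section
variable {α β : Type*} [Fintype α] [Fintype β]

theorem sum_sum_mul_add_sub {R : Type*} [CommRing R] (f : α → β → R) (a : α → R) (b : β → R)
    (c : R) :
    ∑ u, ∑ v, f u v * (a u + b v - c) =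
      ∑ u, a u * ∑ v, f u v + ∑ v, b v * ∑ u, f u v - c * ∑ u, ∑ v, f u v := by
  simp only [mul_add, mul_sub, sum_add_distrib, sum_sub_distrib, mul_sum]
  rw [sum_comm (f := fun u v => f u v * b v)]
  simp only [mul_comm]

noncomputable def additiveFit (π : α → β → ℝ) (u : α) (v : β) : ℝ :=
  (∑ v', π u v') / Fintype.card β + (∑ u', π u' v) / Fintype.card α
    - (∑ u', ∑ v', π u' v') / (Fintype.card α * Fintype.card β)

theorem sum_additiveFit_row [Nonempty α] [Nonempty β] (π : α → β → ℝ) (u : α) :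
    ∑ v, additiveFit π u v = ∑ v, π u v := by
  have hα : (Fintype.card α : ℝ) ≠ 0 := by positivity
  have hβ : (Fintype.card β : ℝ) ≠ 0 := by positivity
  simp only [additiveFit, sum_sub_distrib, sum_add_distrib, sum_const, card_univ, nsmul_eq_mul,
    ← sum_div]
  rw [sum_comm (f := fun u' v => π u' v)]
  field_simp
  ring

theorem sum_additiveFit_col [Nonempty α] [Nonempty β] (π : α → β → ℝ) (v : β) :
    ∑ u, additiveFit π u v = ∑ u, π u v := by
  have hα : (Fintype.card α : ℝ) ≠ 0 := by positivity
  have hβ : (Fintype.card β : ℝ) ≠ 0 := by positivity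
  simp only [additiveFit, sum_sub_distrib, sum_add_distrib, sum_const, card_univ, nsmul_eq_mul,
    ← sum_div]
  field_simp
  ring

theorem sum_sum_sq_sub_additiveFit [Nonempty α] [Nonempty β] (π : α → β → ℝ) :
    ∑ u, ∑ v, (π u v - additiveFit π u v) ^ 2 =
      ∑ u, ∑ v, π u v ^ 2 - (∑ u, (∑ v, π u v) ^ 2) / Fintype.card β
        - (∑ v, (∑ u, π u v) ^ 2) / Fintype.card α
        + (∑ u, ∑ v, π u v) ^ 2 / (Fintype.card α * Fintype.card β) := by
  have h_fit (f : α → β → ℝ) : ∑ u, ∑ v, f u v * additiveFit π u v =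
      ∑ u, (∑ v, π u v) / Fintype.card β * ∑ v, f u v
        + ∑ v, (∑ u, π u v) / Fintype.card α * ∑ u, f u v
        - (∑ u, ∑ v, π u v) / (Fintype.card α * Fintype.card β) * ∑ u, ∑ v, f u v :=
    sum_sum_mul_add_sub f _ _ _
  have h_orth : ∑ u, ∑ v, (π u v - additiveFit π u v) * additiveFit π u v = 0 := by
    simp [h_fit, sum_sub_distrib, sum_additiveFit_row, sum_additiveFit_col]
  calc ∑ u, ∑ v, (π u v - additiveFit π u v) ^ 2
      = ∑ u, ∑ v, π u v * π u v - ∑ u, ∑ v, π u v * additiveFit π u v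
          - ∑ u, ∑ v, (π u v - additiveFit π u v) * additiveFit π u v := by
        simp only [← sum_sub_distrib]; congr! 2; ring
    _ = _ := by
        rw [h_orth, h_fit]
        simp only [div_mul_eq_mul_div, ← pow_two, ← sum_div]
        ring

theorem condorcet_sub_eq_mul_sum_sum_sq [Nonempty α] [Nonempty β] (π : α → β → ℝ)
    (hsum : ∑ u, ∑ v, π u v = 1) :
    ((Fintype.card α : ℝ) - 1) * ((Fintype.card β : ℝ) - 1) * ∑ u, ∑ v, π u v ^ 2
        + ∑ u, ∑ v, π u v * (1 - ∑ v', π u v' - ∑ u', π u' v + π u v)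
      - (((Fintype.card α : ℝ) - 1) * ∑ u, ∑ v, π u v * (∑ v', π u v' - π u v)
        + ((Fintype.card β : ℝ) - 1) * ∑ u, ∑ v, π u v * (∑ u', π u' v - π u v))
      = Fintype.card α * Fintype.card β * ∑ u, ∑ v, (π u v - additiveFit π u v) ^ 2 := by
  have hα : (Fintype.card α : ℝ) ≠ 0 := by positivity
  have hβ : (Fintype.card β : ℝ) ≠ 0 := by positivity
  have h_row : ∑ u, ∑ v, π u v * ∑ v', π u v' = ∑ u, (∑ v, π u v) ^ 2 := by
    simp only [← sum_mul, pow_two]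
  have h_col : ∑ u, ∑ v, π u v * ∑ u', π u' v = ∑ v, (∑ u, π u v) ^ 2 := by
    rw [sum_comm]; simp only [← sum_mul, pow_two]
  rw [sum_sum_sq_sub_additiveFit, hsum]
  simp only [mul_add, mul_sub, mul_one, sum_add_distrib, sum_sub_distrib, h_row, h_col, hsum,
    ← pow_two]
  field_simp
  ring

theorem sum_sum_sq_eq_zero_iff (f : α → β → ℝ) :
    ∑ u, ∑ v, f u v ^ 2 = 0 ↔ ∀ u v, f u v = 0 := by
  simp [Fintype.sum_eq_zero_iff_of_nonneg, sum_nonneg, sq_nonneg, Pi.le_def, funext_iff]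

theorem condorcet_identity_iff (π : α → β → ℝ) (hsum : ∑ u, ∑ v, π u v = 1) :
    ((Fintype.card α : ℝ) - 1) * ((Fintype.card β : ℝ) - 1) * ∑ u, ∑ v, π u v ^ 2
        + ∑ u, ∑ v, π u v * (1 - ∑ v', π u v' - ∑ u', π u' v + π u v)
      = ((Fintype.card α : ℝ) - 1) * ∑ u, ∑ v, π u v * (∑ v', π u v' - π u v)
        + ((Fintype.card β : ℝ) - 1) * ∑ u, ∑ v, π u v * (∑ u', π u' v - π u v)
      ↔ ∀ u v, π u v = additiveFit π u v := by
  have h_rows : ∑ u, ∑ v, π u v ≠ 0 := by rw [hsum]; exact one_ne_zero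
  have h_cols : ∑ v, ∑ u, π u v ≠ 0 := by rw [sum_comm]; exact h_rows
  have := univ_nonempty_iff.mp (nonempty_of_sum_ne_zero h_rows)
  have := univ_nonempty_iff.mp (nonempty_of_sum_ne_zero h_cols)
  rw [← sub_eq_zero, condorcet_sub_eq_mul_sum_sum_sq π hsum,
    mul_eq_zero_iff_left (by positivity), sum_sum_sq_eq_zero_iff]
  simp only [sub_eq_zero]

end

theorem stmt14_general (p q : ℕ)
    (π : Fin p → Fin q → ℝ)
    (hsum : ∑ u, ∑ v, π u v = 1)
    (μ : Fin p → ℝ) (ν : Fin q → ℝ)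
    (hμ : ∀ u, μ u = ∑ v, π u v) (hν : ∀ v, ν v = ∑ u, π u v) :
    (((p : ℝ) - 1) * ((q : ℝ) - 1) * ∑ u, ∑ v, (π u v) ^ 2
        + ∑ u, ∑ v, π u v * (1 - μ u - ν v + π u v)
      = ((p : ℝ) - 1) * ∑ u, ∑ v, π u v * (μ u - π u v)
        + ((q : ℝ) - 1) * ∑ u, ∑ v, π u v * (ν v - π u v)) ↔
    (∀ u v, π u v = μ u / q + ν v / p - 1 / (p * q)) := by
  simp only [hμ, hν]
  simpa only [additiveFit, Fintype.card_fin, hsum] using condorcet_identity_iff π hsum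

theorem stmt14 (p q : ℕ) (hp : 2 ≤ p) (hq : 2 ≤ q)
    (π : Fin p → Fin q → ℝ) (hpos : ∀ u v, 0 ≤ π u v)
    (hsum : ∑ u, ∑ v, π u v = 1)
    (μ : Fin p → ℝ) (ν : Fin q → ℝ)
    (hμ : ∀ u, μ u = ∑ v, π u v) (hν : ∀ v, ν v = ∑ u, π u v) :
    (((p : ℝ) - 1) * ((q : ℝ) - 1) * ∑ u, ∑ v, (π u v) ^ 2
        + ∑ u, ∑ v, π u v * (1 - μ u - ν v + π u v)
      = ((p : ℝ) - 1) * ∑ u, ∑ v, π u v * (μ u - π u v)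
        + ((q : ℝ) - 1) * ∑ u, ∑ v, π u v * (ν v - π u v)) ↔
    (∀ u v, π u v = μ u / q + ν v / p - 1 / (p * q)) :=
  stmt14_general p q π hsum μ ν hμ hν
end
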